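/- Let D = ⟨R_D, C_D, ≺_D⟩ be a defeasible theory with C_D[p] finite for all p ∈ Lit(D), let E be its defeater- and priority-free form, and let ⟨T_{D,WF}, F_{D,WF}⟩ and ⟨T_{E,WF}, F_{E,WF}⟩ be the well-founded models of D and E (both taken under ADL, or both under NDL). Then for every literal p ∈ Lit(D): if p ∈ T_{E,WF} then p ∈ T_{D,WF}, and if p ∈ F_{E,WF} then p ∈ F_{D,WF}. -/

import Mathlib

namespace DLWFS

universe u

/-- Ground literals over a type `A` of atoms: atoms and their classical complements. -/
inductive Lit (A : Type u) : Type u where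
  | pos : A → Lit A
  | neg : A → Lit A

/-- The classical complement `p̄` of a literal `p`. -/
def Lit.compl {A : Type u} : Lit A → Lit A
  | .pos a => .neg a
  | .neg a => .pos a

/-- The three kinds of rules of a defeasible theory. -/
inductive RuleKind : Type where
  | strict
  | defeasible
  | defeater
deriving DecidableEq

/-- A rule of a defeasible theory: a kind, a body (a set of literals) and a head literal. -/
structure DRule (A : Type u) where
  kind : RuleKind
  body : Set (Lit A)
  head : Lit A

/-- A defeasible theory `D = ⟨R, C, ≺⟩`. -/
structure DTheory (A : Type u) where
  rules : Set (DRule A)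
  conflicts : Set (Set (Lit A))
  prec : DRule A → DRule A → Prop

namespace DTheory

variable {A : Type u}

/-- The strict rules `R_s`. -/
def Rs (D : DTheory A) : Set (DRule A) := {r ∈ D.rules | r.kind = RuleKind.strict}

/-- The defeasible rules `R_d`. -/
def Rd (D : DTheory A) : Set (DRule A) := {r ∈ D.rules | r.kind = RuleKind.defeasible}

/-- The defeater rules `R_u`. -/
def Ru (D : DTheory A) : Set (DRule A) := {r ∈ D.rules | r.kind = RuleKind.defeater}

/-- `C[p]`: the conflict sets containing literal `p`. -/
def Cset (D : DTheory A) (p : Lit A) : Set (Set (Lit A)) := {c ∈ D.conflicts | p ∈ c}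

/-- Structural conditions in the definition of a defeasible theory: a countable set of
rules with finite bodies, a countable set of finite conflict sets containing every
minimal conflict set `{p, ¬p}`, and an acyclic priority relation over non-strict rules. -/
def WellFormed (D : DTheory A) : Prop :=
  D.rules.Countable ∧ D.conflicts.Countable ∧
  (∀ r ∈ D.rules, r.body.Finite) ∧
  (∀ c ∈ D.conflicts, c.Finite) ∧
  (∀ p : A, ({Lit.pos p, Lit.neg p} : Set (Lit A)) ∈ D.conflicts) ∧
  (∀ r s, D.prec r s → r.kind ≠ RuleKind.strict ∧ s.kind ≠ RuleKind.strict) ∧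
  (∀ r, ¬ Relation.TransGen D.prec r r)

/-- `C = C_MIN`: the conflict sets are exactly the minimal ones `{p, ¬p}`. -/
def MinimalConflicts (D : DTheory A) : Prop :=
  D.conflicts = {c | ∃ p : A, c = ({Lit.pos p, Lit.neg p} : Set (Lit A))}

end DTheory

/-- A 3-valued interpretation: a pair `⟨T, F⟩` of sets. -/
abbrev Interp (L : Type u) : Type u := Set L × Set L

variable {A : Type u}

/-- `S` is ADL-unfounded with respect to theory `D` and interpretation `I = ⟨T, F⟩`. -/
def ADLUnfounded (D : DTheory A) (I : Interp (Lit A)) (S : Set (Lit A)) : Prop :=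
  ∀ p ∈ S,
    (∀ r ∈ D.Rs, r.head = p → (r.body ∩ (I.2 ∪ S)).Nonempty) ∧
    (∀ r ∈ D.Rd, r.head = p →
      (r.body ∩ (I.2 ∪ S)).Nonempty ∨
      ∃ c ∈ D.conflicts, p ∈ c ∧
        ∀ q ∈ c \ {p}, ∃ s ∈ D.rules, s.head = q ∧ s.body ⊆ I.1 ∧
          (D.prec r s ∨ s.kind = RuleKind.strict))

/-- `S` is NDL-unfounded with respect to theory `D` and interpretation `I = ⟨T, F⟩`. -/
def NDLUnfounded (D : DTheory A) (I : Interp (Lit A)) (S : Set (Lit A)) : Prop :=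
  ∀ p ∈ S,
    (∀ r ∈ D.Rs, r.head = p → (r.body ∩ (I.2 ∪ S)).Nonempty) ∧
    (∀ r ∈ D.Rd, r.head = p →
      (r.body ∩ (I.2 ∪ S)).Nonempty ∨
      ∃ c ∈ D.conflicts, p ∈ c ∧
        ∀ q ∈ c \ {p}, ∃ s ∈ D.rules, s.head = q ∧ s.body ⊆ I.1 ∧
          ¬ D.prec s r)

/-- `U_D(I)` for ADL: the union of all ADL-unfounded sets. -/
def UA (D : DTheory A) (I : Interp (Lit A)) : Set (Lit A) :=
  ⋃₀ {S | ADLUnfounded D I S}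

/-- `U_D(I)` for NDL: the union of all NDL-unfounded sets. -/
def UN (D : DTheory A) (I : Interp (Lit A)) : Set (Lit A) :=
  ⋃₀ {S | NDLUnfounded D I S}

/-- `T_D(I)`: the literals having a witness of provability with respect to `I = ⟨T, F⟩`. -/
def TD (D : DTheory A) (I : Interp (Lit A)) : Set (Lit A) :=
  {p | ∃ r ∈ D.rules, r.head = p ∧ r.body ⊆ I.1 ∧
    (r.kind = RuleKind.strict ∨
      (r.kind = RuleKind.defeasible ∧
        ∀ c ∈ D.conflicts, p ∈ c →
          ∃ q ∈ c \ {p}, ∀ s ∈ D.rules, s.head = q →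
            (D.prec s r ∨ (s.body ∩ I.2).Nonempty)))}

/-- `W_D` for ADL. -/
def WA (D : DTheory A) (I : Interp (Lit A)) : Interp (Lit A) := (TD D I, UA D I)

/-- `W_D` for NDL. -/
def WN (D : DTheory A) (I : Interp (Lit A)) : Interp (Lit A) := (TD D I, UN D I)

/-- `I` is the well-founded model for the operator `W`: the least fixpoint of `W`
(componentwise order). -/
def IsWFModel {L : Type u} (W : Interp L → Interp L) (I : Interp L) : Prop :=
  W I = I ∧ ∀ J, W J = J → I.1 ⊆ J.1 ∧ I.2 ⊆ J.2

/-- A rule of a normal logic program: `head ← pos, ∼neg`. -/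
structure NRule (A : Type u) where
  head : A
  pos : Set A
  neg : Set A

/-- A normal logic program: a set of rules. -/
abbrev NProgram (A : Type u) : Type u := Set (NRule A)

/-- Structural conditions in the definition of a normal logic program: a countable
set of ground rules with finite bodies. -/
def NProgram.WellFormed (P : NProgram A) : Prop :=
  P.Countable ∧ ∀ r ∈ P, r.pos.Finite ∧ r.neg.Finite

/-- The immediate consequence operator `T_Π` on 3-valued interpretations. -/
def TP (P : NProgram A) (I : Interp A) : Set A :=
  {a | ∃ r ∈ P, r.head = a ∧ r.pos ⊆ I.1 ∧ r.neg ⊆ I.2}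

/-- `S` is an unfounded set of program `P` with respect to interpretation `I = ⟨T, F⟩`. -/
def PUnfounded (P : NProgram A) (I : Interp A) (S : Set A) : Prop :=
  ∀ p ∈ S, ∀ r ∈ P, r.head = p →
    (r.pos ∩ (I.2 ∪ S)).Nonempty ∨ (r.neg ∩ I.1).Nonempty

/-- `U_Π(I)`: the greatest unfounded set (union of all unfounded sets). -/
def UP (P : NProgram A) (I : Interp A) : Set A :=
  ⋃₀ {S | PUnfounded P I S}

/-- `W_Π(I) = ⟨T_Π(I), U_Π(I)⟩`. -/
def WP (P : NProgram A) (I : Interp A) : Interp A := (TP P I, UP P I)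

/-- Transfinite iteration of an operator `W` from `⊥`, taking suprema at limit ordinals. -/
noncomputable def iterW {α : Type*} [CompleteLattice α] (W : α → α) : Ordinal.{0} → α :=
  fun o =>
    Ordinal.limitRecOn (motive := fun _ => α) o ⊥ (fun _ ih => W ih)
      (fun o' _ ih => ⨆ x : Set.Iio o', ih x.1 x.2)

/-- One step of the immediate consequence operator for a set of defeasible-theory rules. -/
def TRstep (R : Set (DRule A)) (S : Set (Lit A)) : Set (Lit A) :=
  {p | ∃ r ∈ R, r.head = p ∧ r.body ⊆ S}

/-- The finite iterates `T_R ↑ n`. -/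
def TRiter (R : Set (DRule A)) : ℕ → Set (Lit A)
  | 0 => ∅
  | n + 1 => TRstep R (TRiter R n)

/-- `Cl(R) = T_R ↑ ω`. -/
def ClR (R : Set (DRule A)) : Set (Lit A) := ⋃ n, TRiter R n

/-- The `α`-reduct `D_α^S` of a defeasible theory. -/
def alphaReduct (D : DTheory A) (S : Set (Lit A)) : Set (DRule A) :=
  D.Rs ∪ {r ∈ D.Rd | ∀ c ∈ D.conflicts, r.head ∈ c → ∃ q ∈ c \ {r.head}, q ∉ S}

/-- The ambiguity-propagating operator `α_D(S) = Cl(D_α^S)`. -/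
def alphaOp (D : DTheory A) (S : Set (Lit A)) : Set (Lit A) := ClR (alphaReduct D S)

/-- The `β`-reduct `D_β^S` of a defeasible theory. -/
def betaReduct (D : DTheory A) (S : Set (Lit A)) : Set (DRule A) :=
  D.Rs ∪ {r ∈ D.Rd | ∀ c ∈ D.conflicts, r.head ∈ c →
    ∃ q ∈ c \ {r.head}, ∀ s ∈ D.rules, s.head = q → (¬ s.body ⊆ S ∨ D.prec s r)}

/-- The ambiguity-blocking operator `β_D(S) = Cl(D_β^S)`. -/
def betaOp (D : DTheory A) (S : Set (Lit A)) : Set (Lit A) := ClR (betaReduct D S)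

/-- `S` is an `α`-stable set of `D`. -/
def AlphaStable (D : DTheory A) (S : Set (Lit A)) : Prop := alphaOp D S = S

/-- `S` is a `β`-stable set of `D`. -/
def BetaStable (D : DTheory A) (S : Set (Lit A)) : Prop := betaOp D S = S

/-- The sequence `X_D↑λ`: `X↑0 = ∅`, `X↑(λ+1) = β_D(β_D(X↑λ))`, unions at limits. -/
noncomputable def Xseq (D : DTheory A) : Ordinal.{0} → Set (Lit A) :=
  iterW (fun S => betaOp D (betaOp D S))

/-- The Gelfond–Lifschitz reduct `Π^S`. -/
def glReduct (P : NProgram A) (S : Set A) : NProgram A :=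
  {r' | ∃ r ∈ P, r.neg ∩ S = ∅ ∧ r' = NRule.mk r.head r.pos ∅}

/-- One step of the immediate consequence operator for a NAF-free program. -/
def TPstep (P : NProgram A) (S : Set A) : Set A :=
  {a | ∃ r ∈ P, r.head = a ∧ r.pos ⊆ S}

/-- The finite iterates `T_Π ↑ n` of a NAF-free program. -/
def TPiter (P : NProgram A) : ℕ → Set A
  | 0 => ∅
  | n + 1 => TPstep P (TPiter P n)

/-- `Cl(Π) = T_Π ↑ ω`. -/
def ClP (P : NProgram A) : Set A := ⋃ n, TPiter P n

/-- The Gelfond–Lifschitz operator `γ_Π(S) = Cl(Π^S)`. -/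
def gamma (P : NProgram A) (S : Set A) : Set A := ClP (glReduct P S)

/-- `S` is a stable model of `P`. -/
def StableModel (P : NProgram A) (S : Set A) : Prop := gamma P S = S

/-- `Prod(C[p])`: all sets obtained by choosing one literal other than `p` from each
conflict set containing `p`. -/
def ProdC (D : DTheory A) (p : Lit A) : Set (Set (Lit A)) :=
  {Q | ∃ f : Set (Lit A) → Lit A,
    (∀ c ∈ D.conflicts, p ∈ c → f c ∈ c \ {p}) ∧
    Q = f '' {c ∈ D.conflicts | p ∈ c}}

/-- The logic program translation `Π_D` of a defeasible theory `D` (negative literals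
are treated as fresh atoms, so the atoms of the program are the literals of `D`). -/
def lpTrans (D : DTheory A) : NProgram (Lit A) :=
  {r' | ∃ r ∈ D.Rs, r' = NRule.mk r.head r.body ∅} ∪
  {r' | ∃ r ∈ D.Rd, ∃ Q ∈ ProdC D r.head, r' = NRule.mk r.head r.body Q}

/-- The explicit version `Φ` of a normal program `Π`: atoms of `Φ` are the literals
over the atoms of `Π` (`¬p` being a fresh atom). -/
def explicitVer (P : NProgram A) : NProgram (Lit A) :=
  {r' | ∃ r ∈ P, r' = NRule.mk (Lit.pos r.head) (Lit.pos '' r.pos ∪ Lit.neg '' r.neg) ∅} ∪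
  {r' | ∃ p : A, r' = NRule.mk (Lit.neg p) ∅ {Lit.pos p}}

/-- The minimal conflict sets over atom type `A`. -/
def CMin (A : Type u) : Set (Set (Lit A)) :=
  {c | ∃ p : A, c = ({Lit.pos p, Lit.neg p} : Set (Lit A))}

/-- The defeasible theory translation `D_Π` of a normal program `Π`: each program rule
becomes a strict rule (default literals `∼b` becoming negative literals `¬b`), and each
atom `p` yields a presumption `∅ ⇒ ¬p`; conflict sets are minimal and `≺` is empty. -/
def dtTrans (P : NProgram A) : DTheory A :=
  { rules :=
      {e | ∃ r ∈ P, e = DRule.mk RuleKind.strict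
            (Lit.pos '' r.pos ∪ Lit.neg '' r.neg) (Lit.pos r.head)} ∪
      {e | ∃ p : A, e = DRule.mk RuleKind.defeasible ∅ (Lit.neg p)}
    conflicts := CMin A
    prec := fun _ _ => False }

/-- `M^¬ = M ∪ {¬p : p ∉ M}`, atoms being identified with positive literals. -/
def negCompl (M : Set A) : Set (Lit A) :=
  Lit.pos '' M ∪ Lit.neg '' {p | p ∉ M}

end DLWFS

namespace DLWFS

variable {A : Type u}

/-- The fresh atom `su(r)` of the defeater- and priority-free form, as a literal. -/
def suLit (r : DRule A) : Lit (A ⊕ DRule A × Bool) := Lit.pos (Sum.inr (r, true))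

/-- The fresh atom `fi(r)` of the defeater- and priority-free form, as a literal. -/
def fiLit (r : DRule A) : Lit (A ⊕ DRule A × Bool) := Lit.pos (Sum.inr (r, false))

/-- The literal `¬fi(r)`. -/
def nfiLit (r : DRule A) : Lit (A ⊕ DRule A × Bool) := Lit.neg (Sum.inr (r, false))

/-- Embedding of the literals of `D` into the literals of its defeater- and
priority-free form. -/
def liftLit : Lit A → Lit (A ⊕ DRule A × Bool)
  | .pos a => .pos (Sum.inl a)
  | .neg a => .neg (Sum.inl a)

/-- `RuleKind.strict` if the proposition holds, `RuleKind.defeasible` otherwise. -/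
noncomputable def strictIf (c : Prop) : RuleKind :=
  @ite _ c (Classical.propDecidable c) RuleKind.strict RuleKind.defeasible

/-- The rules of the defeater- and priority-free form `E` of `D`:
(1) for each rule `r : A ⤳ p` of `D`, the strict rule `A → su(r)` and the rule
`{su(r)} → fi(r)` (strict if `r` is strict, defeasible if `r` is defeasible or a
defeater); (2) if `r` is strict or defeasible, the strict rule `{fi(r)} → p`;
(3) for each conflict set `c ∈ C_D[head(r)]` with `r` defeasible and each choice of
rules `s q ∈ R_D[q]` (for `q ∈ c − {head(r)}`) with `¬ (s q ≺_D r)`, the rule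
`{su(s q) : q ∈ c − {head r}} ⟶ ¬fi(r)`, strict if every `s q` is strict or satisfies
`r ≺_D s q`, and defeasible otherwise. -/
noncomputable def EFormRules (D : DTheory A) : Set (DRule (A ⊕ DRule A × Bool)) :=
  {e | ∃ r ∈ D.rules, e = DRule.mk RuleKind.strict (liftLit '' r.body) (suLit r)} ∪
  {e | ∃ r ∈ D.rules,
    e = DRule.mk (strictIf (r.kind = RuleKind.strict)) {suLit r} (fiLit r)} ∪
  {e | ∃ r ∈ D.rules, r.kind ≠ RuleKind.defeater ∧
    e = DRule.mk RuleKind.strict {fiLit r} (liftLit r.head)} ∪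
  {e | ∃ r ∈ D.Rd, ∃ c ∈ D.conflicts, r.head ∈ c ∧
    ∃ s : Lit A → DRule A,
      (∀ q ∈ c \ {r.head}, s q ∈ D.rules ∧ (s q).head = q ∧ ¬ D.prec (s q) r) ∧
      e = DRule.mk
        (strictIf (∀ q ∈ c \ {r.head},
          (s q).kind = RuleKind.strict ∨ D.prec r (s q)))
        ((fun q => suLit (s q)) '' (c \ {r.head})) (nfiLit r)}

/-- The defeater- and priority-free form `E` of a defeasible theory `D`: it uses the
rules above, minimal conflict sets, and the empty priority relation. -/
noncomputable def EForm (D : DTheory A) : DTheory (A ⊕ DRule A × Bool) :=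
  { rules := EFormRules D
    conflicts := CMin (A ⊕ DRule A × Bool)
    prec := fun _ _ => False }

end DLWFS


/-!
Every fixpoint `⟨T, F⟩` of `W_D` extends to a fixpoint of `W_E` that agrees with it on the
literals of `D`: `su(r)` takes the value of the body of `r`; `fi(r)` is true when `r` is a
witness of provability and false when its body is false or it is overruled by applicable
rules for the rest of a conflict set; `¬fi(r)` is true when some attack on `r` is applicable
and is either strict or faces a false body of `r`. The well-founded model of `E`, being the
least fixpoint of `W_E`, lies below this extension. ADL and NDL differ only in the blocking
relation of unfounded sets, so both are handled at once.
-/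

namespace DLWFS

variable {A : Type u}

inductive Mode : Type where
  | adl
  | ndl

def Blocks (m : Mode) (D : DTheory A) (r s : DRule A) : Prop :=
  match m with
  | .adl => D.prec r s ∨ s.kind = RuleKind.strict
  | .ndl => ¬ D.prec s r

/-- `Unfounded .adl` and `Unfounded .ndl` unfold to `ADLUnfounded` and `NDLUnfounded`. -/
def Unfounded (m : Mode) (D : DTheory A) (I : Interp (Lit A)) (S : Set (Lit A)) : Prop :=
  ∀ p ∈ S,
    (∀ r ∈ D.Rs, r.head = p → (r.body ∩ (I.2 ∪ S)).Nonempty) ∧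
    (∀ r ∈ D.Rd, r.head = p →
      (r.body ∩ (I.2 ∪ S)).Nonempty ∨
      ∃ c ∈ D.conflicts, p ∈ c ∧
        ∀ q ∈ c \ {p}, ∃ s ∈ D.rules, s.head = q ∧ s.body ⊆ I.1 ∧ Blocks m D r s)

def greatestUnfounded (m : Mode) (D : DTheory A) (I : Interp (Lit A)) : Set (Lit A) :=
  ⋃₀ {S | Unfounded m D I S}

def W (m : Mode) (D : DTheory A) (I : Interp (Lit A)) : Interp (Lit A) :=
  (TD D I, greatestUnfounded m D I)

section Unfounded

variable {m : Mode} {D : DTheory A} {I : Interp (Lit A)}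

lemma unfounded_greatestUnfounded : Unfounded m D I (greatestUnfounded m D I) := by
  rintro p ⟨S, hS, hpS⟩
  have hsub : I.2 ∪ S ⊆ I.2 ∪ greatestUnfounded m D I :=
    Set.union_subset_union_right _ (Set.subset_sUnion_of_mem hS)
  obtain ⟨hstrict, hdef⟩ := hS p hpS
  exact ⟨fun r hr hh => (hstrict r hr hh).mono (Set.inter_subset_inter_right _ hsub),
    fun r hr hh => (hdef r hr hh).imp_left (·.mono (Set.inter_subset_inter_right _ hsub))⟩

lemma Blocks.not_prec (hwf : D.WellFormed) {r s : DRule A} (h : Blocks m D r s) :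
    ¬ D.prec s r := by
  obtain ⟨-, -, -, -, -, hstrict, hacyc⟩ := hwf
  cases m with
  | ndl => exact h
  | adl =>
    intro hsr
    rcases h with hrs | hs
    · exact hacyc r (.head hrs (.single hsr))
    · exact (hstrict s r hsr).1 hs

end Unfounded

lemma exists_forall_mem_of_forall_mem_exists {ι α : Type*} (d : ι → α) {c : Set ι}
    {P : ι → α → Prop} (h : ∀ i ∈ c, ∃ x, P i x) : ∃ f : ι → α, ∀ i ∈ c, P i (f i) := by
  classical
  exact ⟨fun i => if hi : i ∈ c then (h i hi).choose else d i,
    fun i hi => by simpa only [dif_pos hi] using (h i hi).choose_spec⟩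

section MinimalConflicts

variable {B : Type*}

lemma Lit.compl_ne (p : Lit B) : p.compl ≠ p := by
  cases p <;> simp [Lit.compl]

lemma pair_compl_mem_CMin (p : Lit B) : ({p, p.compl} : Set (Lit B)) ∈ CMin B := by
  cases p with
  | pos a => exact ⟨a, rfl⟩
  | neg a => exact ⟨a, Set.pair_comm _ _⟩

lemma eq_pair_compl_of_mem_CMin {c : Set (Lit B)} {p : Lit B} (hc : c ∈ CMin B)
    (hp : p ∈ c) : c = {p, p.compl} := by
  obtain ⟨a, rfl⟩ := hc
  rcases hp with rfl | rfl
  · rfl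
  · exact Set.pair_comm _ _

lemma pair_compl_diff (p : Lit B) : ({p, p.compl} : Set (Lit B)) \ {p} = {p.compl} := by
  rw [Set.insert_sdiff_of_mem _ (Set.mem_singleton p), Set.sdiff_singleton_eq_self]
  exact fun h => p.compl_ne (Set.mem_singleton_iff.1 h).symm

lemma forall_CMin_exists_iff (p : Lit B) (K : Lit B → Prop) :
    (∀ c ∈ CMin B, p ∈ c → ∃ q ∈ c \ {p}, K q) ↔ K p.compl := by
  refine ⟨fun h => ?_, fun h c hc hpc => ?_⟩
  · simpa [pair_compl_diff, p.compl_ne] using h _ (pair_compl_mem_CMin p) (.inl rfl)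
  · rw [eq_pair_compl_of_mem_CMin hc hpc, pair_compl_diff]
    exact ⟨p.compl, rfl, h⟩

lemma exists_CMin_forall_iff (p : Lit B) (K : Lit B → Prop) :
    (∃ c ∈ CMin B, p ∈ c ∧ ∀ q ∈ c \ {p}, K q) ↔ K p.compl := by
  refine ⟨fun ⟨c, hc, hpc, h⟩ => ?_, fun h => ⟨_, pair_compl_mem_CMin p, .inl rfl, ?_⟩⟩
  · rw [eq_pair_compl_of_mem_CMin hc hpc, pair_compl_diff] at h
    exact h _ rfl
  · simpa [pair_compl_diff, p.compl_ne] using h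

variable {E : DTheory B}

lemma mem_TD_iff_of_CMin (hC : E.conflicts = CMin B) (hprec : ∀ r s, ¬ E.prec r s)
    (hdef : ∀ e ∈ E.rules, e.kind ≠ RuleKind.defeater) {I : Interp (Lit B)} {l : Lit B} :
    l ∈ TD E I ↔ ∃ e ∈ E.rules, e.head = l ∧ e.body ⊆ I.1 ∧
      (e.kind = RuleKind.strict ∨ ∀ s ∈ E.rules, s.head = l.compl → (s.body ∩ I.2).Nonempty) := by
  simp only [TD, Set.mem_ofPred_eq, hC, forall_CMin_exists_iff, hprec, false_or]
  refine exists_congr fun e => and_congr_right fun he =>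
    and_congr_right fun _ => and_congr_right fun _ => ?_
  cases hk : e.kind
  · simp
  · simp
  · exact absurd hk (hdef e he)

def Refuted (m : Mode) (E : DTheory B) (I : Interp (Lit B)) (S : Set (Lit B)) (e : DRule B) :
    Prop :=
  (e.body ∩ (I.2 ∪ S)).Nonempty ∨
    e.kind ≠ RuleKind.strict ∧ ∃ s ∈ E.rules, s.head = e.head.compl ∧ s.body ⊆ I.1 ∧
      (m = Mode.ndl ∨ s.kind = RuleKind.strict)

lemma unfounded_iff_of_CMin (hC : E.conflicts = CMin B) (hprec : ∀ r s, ¬ E.prec r s)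
    (hdef : ∀ e ∈ E.rules, e.kind ≠ RuleKind.defeater) {m : Mode} {I : Interp (Lit B)}
    {S : Set (Lit B)} :
    Unfounded m E I S ↔ ∀ e ∈ E.rules, e.head ∈ S → Refuted m E I S e := by
  have hblocks : ∀ r s, Blocks m E r s ↔ m = .ndl ∨ s.kind = .strict := by
    intro r s
    cases m <;> simp [Blocks, hprec]
  have hover : ∀ e : DRule B, (∃ c ∈ E.conflicts, e.head ∈ c ∧ ∀ q ∈ c \ {e.head},
      ∃ s ∈ E.rules, s.head = q ∧ s.body ⊆ I.1 ∧ Blocks m E e s) ↔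
      ∃ s ∈ E.rules, s.head = e.head.compl ∧ s.body ⊆ I.1 ∧ (m = .ndl ∨ s.kind = .strict) := by
    intro e
    simp only [hC, exists_CMin_forall_iff, hblocks]
  constructor
  · intro h e he heS
    obtain ⟨hs, hd⟩ := h _ heS
    cases hk : e.kind
    · exact .inl (hs e ⟨he, hk⟩ rfl)
    · exact (hd e ⟨he, hk⟩ rfl).imp_right fun hc => ⟨by simp [hk], (hover e).1 hc⟩
    · exact absurd hk (hdef e he)
  · intro h p hp
    refine ⟨fun e ⟨he, hk⟩ hh => ?_, fun e ⟨he, _⟩ hh => ?_⟩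
    · subst hh
      exact (h e he hp).resolve_right fun h' => h'.1 hk
    · subst hh
      exact (h e he hp).imp_right fun h' => (hover e).2 h'.2

end MinimalConflicts

lemma strictIf_eq_strict {c : Prop} : strictIf c = RuleKind.strict ↔ c := by
  unfold strictIf
  split_ifs with h <;> simp [h]

lemma strictIf_ne_defeater (c : Prop) : strictIf c ≠ RuleKind.defeater := by
  unfold strictIf
  split_ifs <;> simp

def suRule (r : DRule A) : DRule (A ⊕ DRule A × Bool) :=
  ⟨RuleKind.strict, liftLit '' r.body, suLit r⟩

noncomputable def fiRule (r : DRule A) : DRule (A ⊕ DRule A × Bool) :=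
  ⟨strictIf (r.kind = RuleKind.strict), {suLit r}, fiLit r⟩

def linkRule (r : DRule A) : DRule (A ⊕ DRule A × Bool) :=
  ⟨RuleKind.strict, {fiLit r}, liftLit r.head⟩

def AttackChoice (D : DTheory A) (r : DRule A) (c : Set (Lit A)) (f : Lit A → DRule A) :
    Prop :=
  r ∈ D.Rd ∧ c ∈ D.conflicts ∧ r.head ∈ c ∧
    ∀ q ∈ c \ {r.head}, f q ∈ D.rules ∧ (f q).head = q ∧ ¬ D.prec (f q) r

def StrictAttack (D : DTheory A) (r : DRule A) (c : Set (Lit A)) (f : Lit A → DRule A) :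
    Prop :=
  ∀ q ∈ c \ {r.head}, (f q).kind = RuleKind.strict ∨ D.prec r (f q)

noncomputable def attackRule (D : DTheory A) (r : DRule A) (c : Set (Lit A))
    (f : Lit A → DRule A) : DRule (A ⊕ DRule A × Bool) :=
  ⟨strictIf (StrictAttack D r c f), (fun q => suLit (f q)) '' (c \ {r.head}), nfiLit r⟩

section Anatomy

variable {D : DTheory A} {r : DRule A} {e : DRule (A ⊕ DRule A × Bool)}

lemma mem_EFormRules : e ∈ EFormRules D ↔
    (∃ r ∈ D.rules, e = suRule r) ∨ (∃ r ∈ D.rules, e = fiRule r) ∨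
    (∃ r ∈ D.rules, r.kind ≠ RuleKind.defeater ∧ e = linkRule r) ∨
    ∃ r c f, AttackChoice D r c f ∧ e = attackRule D r c f := by
  simp only [EFormRules, Set.mem_union, Set.mem_ofPred_eq, or_assoc]
  refine or_congr_right (or_congr_right (or_congr_right ⟨?_, ?_⟩))
  · rintro ⟨r, hr, c, hc, hrc, f, hf, rfl⟩
    exact ⟨r, c, f, ⟨hr, hc, hrc, hf⟩, rfl⟩
  · rintro ⟨r, c, f, ⟨hr, hc, hrc, hf⟩, rfl⟩
    exact ⟨r, hr, c, hc, hrc, f, hf, rfl⟩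

lemma suRule_mem (hr : r ∈ D.rules) : suRule r ∈ EFormRules D :=
  mem_EFormRules.2 (.inl ⟨r, hr, rfl⟩)

lemma fiRule_mem (hr : r ∈ D.rules) : fiRule r ∈ EFormRules D :=
  mem_EFormRules.2 (.inr (.inl ⟨r, hr, rfl⟩))

lemma linkRule_mem (hr : r ∈ D.rules) (hk : r.kind ≠ RuleKind.defeater) :
    linkRule r ∈ EFormRules D :=
  mem_EFormRules.2 (.inr (.inr (.inl ⟨r, hr, hk, rfl⟩)))

lemma attackRule_mem {c : Set (Lit A)} {f : Lit A → DRule A} (h : AttackChoice D r c f) :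
    attackRule D r c f ∈ EFormRules D :=
  mem_EFormRules.2 (.inr (.inr (.inr ⟨r, c, f, h, rfl⟩)))

lemma kind_ne_defeater_of_mem_EFormRules (he : e ∈ EFormRules D) :
    e.kind ≠ RuleKind.defeater := by
  rcases mem_EFormRules.1 he with ⟨r, -, rfl⟩ | ⟨r, -, rfl⟩ | ⟨r, -, -, rfl⟩ | ⟨r, c, f, -, rfl⟩
  · simp [suRule]
  · exact strictIf_ne_defeater _
  · simp [linkRule]
  · exact strictIf_ne_defeater _

@[simp] lemma liftLit_ne_pos_inr (p : Lit A) (x : DRule A × Bool) :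
    liftLit p ≠ Lit.pos (Sum.inr x) := by
  cases p <;> simp [liftLit]

@[simp] lemma liftLit_ne_neg_inr (p : Lit A) (x : DRule A × Bool) :
    liftLit p ≠ Lit.neg (Sum.inr x) := by
  cases p <;> simp [liftLit]

@[simp] lemma suRule_head : (suRule r).head = suLit r := rfl

@[simp] lemma fiRule_head : (fiRule r).head = fiLit r := rfl

@[simp] lemma linkRule_head : (linkRule r).head = liftLit r.head := rfl

@[simp] lemma attackRule_head {c : Set (Lit A)} {f : Lit A → DRule A} :
    (attackRule D r c f).head = nfiLit r := rfl

lemma eq_fiRule_of_head_eq_fiLit (he : e ∈ EFormRules D) (hh : e.head = fiLit r) :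
    e = fiRule r := by
  rcases mem_EFormRules.1 he with ⟨r', -, rfl⟩ | ⟨r', -, rfl⟩ | ⟨r', -, -, rfl⟩ |
    ⟨r', c, f, -, rfl⟩ <;> simp [suLit, fiLit, nfiLit] at hh
  rw [hh]

lemma exists_attackChoice_of_head_eq_nfiLit (he : e ∈ EFormRules D) (hh : e.head = nfiLit r) :
    ∃ c f, AttackChoice D r c f ∧ e = attackRule D r c f := by
  rcases mem_EFormRules.1 he with ⟨r', -, rfl⟩ | ⟨r', -, rfl⟩ | ⟨r', -, -, rfl⟩ |
    ⟨r', c, f, hf, rfl⟩ <;> simp [suLit, fiLit, nfiLit] at hh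
  subst hh
  exact ⟨c, f, hf, rfl⟩

lemma mem_TD_EForm_iff {I : Interp (Lit (A ⊕ DRule A × Bool))} {l : Lit (A ⊕ DRule A × Bool)} :
    l ∈ TD (EForm D) I ↔ ∃ e ∈ EFormRules D, e.head = l ∧ e.body ⊆ I.1 ∧
      (e.kind = RuleKind.strict ∨
        ∀ s ∈ EFormRules D, s.head = l.compl → (s.body ∩ I.2).Nonempty) :=
  mem_TD_iff_of_CMin rfl (fun _ _ h => h) fun _ => kind_ne_defeater_of_mem_EFormRules

lemma unfounded_EForm_iff {m : Mode} {I : Interp (Lit (A ⊕ DRule A × Bool))}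
    {S : Set (Lit (A ⊕ DRule A × Bool))} :
    Unfounded m (EForm D) I S ↔ ∀ e ∈ EFormRules D, e.head ∈ S → Refuted m (EForm D) I S e :=
  unfounded_iff_of_CMin rfl (fun _ _ h => h) fun _ => kind_ne_defeater_of_mem_EFormRules

end Anatomy

def Unchallenged (D : DTheory A) (F : Set (Lit A)) (r : DRule A) : Prop :=
  ∀ c ∈ D.conflicts, r.head ∈ c → ∃ q ∈ c \ {r.head},
    ∀ s ∈ D.rules, s.head = q → D.prec s r ∨ (s.body ∩ F).Nonempty

def Overruled (m : Mode) (D : DTheory A) (T : Set (Lit A)) (r : DRule A) : Prop :=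
  ∃ c ∈ D.conflicts, r.head ∈ c ∧
    ∀ q ∈ c \ {r.head}, ∃ s ∈ D.rules, s.head = q ∧ s.body ⊆ T ∧ Blocks m D r s

/-- Together with `eformFalse`, the fixpoint of `W` for `EForm D` that extends a fixpoint
`⟨T, F⟩` of `W` for `D`; the atom `.inr (r, true)` is `su(r)` and `.inr (r, false)` is `fi(r)`. -/
def eformTrue (D : DTheory A) (T F : Set (Lit A)) : Set (Lit (A ⊕ DRule A × Bool)) :=
  {l | match l with
    | .pos (.inl a) => Lit.pos a ∈ T
    | .neg (.inl a) => Lit.neg a ∈ T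
    | .pos (.inr (r, true)) => r ∈ D.rules ∧ r.body ⊆ T
    | .pos (.inr (r, false)) =>
        r ∈ D.rules ∧ r.body ⊆ T ∧ (r.kind = RuleKind.defeasible → Unchallenged D F r)
    | .neg (.inr (_, true)) => False
    | .neg (.inr (r, false)) => ∃ c f, AttackChoice D r c f ∧
        (∀ q ∈ c \ {r.head}, (f q).body ⊆ T) ∧ (StrictAttack D r c f ∨ (r.body ∩ F).Nonempty)}

def eformFalse (m : Mode) (D : DTheory A) (T F : Set (Lit A)) :
    Set (Lit (A ⊕ DRule A × Bool)) :=
  {l | match l with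
    | .pos (.inl a) => Lit.pos a ∈ F
    | .neg (.inl a) => Lit.neg a ∈ F
    | .pos (.inr (r, true)) => r ∉ D.rules ∨ (r.body ∩ F).Nonempty
    | .pos (.inr (r, false)) =>
        r ∉ D.rules ∨ (r.body ∩ F).Nonempty ∨ (r.kind = RuleKind.defeasible ∧ Overruled m D T r)
    | .neg (.inr (_, true)) => True
    | .neg (.inr (r, false)) => ∀ c f, AttackChoice D r c f →
        (∃ q ∈ c \ {r.head}, ((f q).body ∩ F).Nonempty) ∨
          (¬ StrictAttack D r c f ∧ m = Mode.ndl ∧ r.body ⊆ T)}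

section Extension

variable {m : Mode} {D : DTheory A} {T F : Set (Lit A)} {r : DRule A}

lemma mem_eformTrue_liftLit {p : Lit A} : liftLit p ∈ eformTrue D T F ↔ p ∈ T := by
  cases p <;> rfl

lemma mem_eformTrue_suLit : suLit r ∈ eformTrue D T F ↔ r ∈ D.rules ∧ r.body ⊆ T :=
  Iff.rfl

lemma mem_eformTrue_fiLit : fiLit r ∈ eformTrue D T F ↔
    r ∈ D.rules ∧ r.body ⊆ T ∧ (r.kind = RuleKind.defeasible → Unchallenged D F r) :=
  Iff.rfl

lemma mem_eformTrue_nfiLit : nfiLit r ∈ eformTrue D T F ↔ ∃ c f, AttackChoice D r c f ∧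
    (∀ q ∈ c \ {r.head}, (f q).body ⊆ T) ∧ (StrictAttack D r c f ∨ (r.body ∩ F).Nonempty) :=
  Iff.rfl

lemma mem_eformFalse_liftLit {p : Lit A} : liftLit p ∈ eformFalse m D T F ↔ p ∈ F := by
  cases p <;> rfl

lemma mem_eformFalse_suLit :
    suLit r ∈ eformFalse m D T F ↔ r ∉ D.rules ∨ (r.body ∩ F).Nonempty :=
  Iff.rfl

lemma mem_eformFalse_fiLit : fiLit r ∈ eformFalse m D T F ↔ r ∉ D.rules ∨
    (r.body ∩ F).Nonempty ∨ (r.kind = RuleKind.defeasible ∧ Overruled m D T r) :=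
  Iff.rfl

lemma mem_eformFalse_nfiLit : nfiLit r ∈ eformFalse m D T F ↔ ∀ c f, AttackChoice D r c f →
    (∃ q ∈ c \ {r.head}, ((f q).body ∩ F).Nonempty) ∨
      (¬ StrictAttack D r c f ∧ m = Mode.ndl ∧ r.body ⊆ T) :=
  Iff.rfl

lemma forall_attack_meets_eformFalse_iff (hr : r ∈ D.Rd) :
    (∀ e ∈ EFormRules D, e.head = nfiLit r → (e.body ∩ eformFalse m D T F).Nonempty) ↔
      Unchallenged D F r := by
  constructor
  · intro h c hc hrc
    by_contra! hcon
    obtain ⟨f, hf⟩ := exists_forall_mem_of_forall_mem_exists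
      (fun q => (⟨RuleKind.strict, ∅, q⟩ : DRule A)) hcon
    obtain ⟨_, ⟨q, hq, rfl⟩, hmem⟩ := h _ (attackRule_mem
      ⟨hr, hc, hrc, fun q hq => ⟨(hf q hq).1, (hf q hq).2.1, (hf q hq).2.2.1⟩⟩) rfl
    rcases mem_eformFalse_suLit.1 hmem with h' | h'
    · exact h' (hf q hq).1
    · exact h'.ne_empty (hf q hq).2.2.2
  · intro hU e he hh
    obtain ⟨c, f, ⟨-, hc, hrc, hf⟩, rfl⟩ := exists_attackChoice_of_head_eq_nfiLit he hh
    obtain ⟨q, hq, hblk⟩ := hU c hc hrc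
    obtain ⟨hfq, hhead, hnprec⟩ := hf q hq
    exact ⟨suLit (f q), ⟨q, hq, rfl⟩,
      mem_eformFalse_suLit.2 (.inr ((hblk _ hfq hhead).resolve_left hnprec))⟩

lemma Overruled.exists_attack (hwf : D.WellFormed) (hr : r ∈ D.Rd) (h : Overruled m D T r) :
    ∃ e ∈ EFormRules D, e.head = nfiLit r ∧ e.body ⊆ eformTrue D T F ∧
      (m = Mode.ndl ∨ e.kind = RuleKind.strict) := by
  obtain ⟨c, hc, hrc, hs⟩ := h
  obtain ⟨f, hf⟩ := exists_forall_mem_of_forall_mem_exists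
    (fun q => (⟨RuleKind.strict, ∅, q⟩ : DRule A)) hs
  refine ⟨_, attackRule_mem ⟨hr, hc, hrc, fun q hq =>
    ⟨(hf q hq).1, (hf q hq).2.1, (hf q hq).2.2.2.not_prec hwf⟩⟩, rfl, ?_, ?_⟩
  · rintro _ ⟨q, hq, rfl⟩
    exact mem_eformTrue_suLit.2 ⟨(hf q hq).1, (hf q hq).2.2.1⟩
  · cases m
    · exact .inr (strictIf_eq_strict.2 fun q hq => Or.symm (hf q hq).2.2.2)
    · exact .inl rfl

lemma overruled_of_exists_attack (h : ∃ e ∈ EFormRules D, e.head = nfiLit r ∧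
    e.body ⊆ eformTrue D T F ∧ (m = Mode.ndl ∨ e.kind = RuleKind.strict)) :
    r ∈ D.Rd ∧ Overruled m D T r := by
  obtain ⟨e, he, hh, hbody, hmode⟩ := h
  obtain ⟨c, f, ⟨hr, hc, hrc, hf⟩, rfl⟩ := exists_attackChoice_of_head_eq_nfiLit he hh
  refine ⟨hr, c, hc, hrc, fun q hq => ⟨f q, (hf q hq).1, (hf q hq).2.1,
    (mem_eformTrue_suLit.1 (hbody ⟨q, hq, rfl⟩)).2, ?_⟩⟩
  cases m
  · exact Or.symm (strictIf_eq_strict.1 (hmode.resolve_left (by simp)) q hq)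
  · exact (hf q hq).2.2

lemma TD_EForm_subset (hT : TD D (T, F) ⊆ T) :
    TD (EForm D) (eformTrue D T F, eformFalse m D T F) ⊆ eformTrue D T F := by
  intro l hl
  obtain ⟨e, he, rfl, hbody, hk⟩ := mem_TD_EForm_iff.1 hl
  rcases mem_EFormRules.1 he with ⟨r, hr, rfl⟩ | ⟨r, hr, rfl⟩ | ⟨r, hr, hkr, rfl⟩ |
    ⟨r, c, f, hf, rfl⟩
  · exact mem_eformTrue_suLit.2 ⟨hr, fun q hq => mem_eformTrue_liftLit.1 (hbody ⟨q, hq, rfl⟩)⟩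
  · refine mem_eformTrue_fiLit.2 ⟨hr, (mem_eformTrue_suLit.1 (hbody rfl)).2, fun hd => ?_⟩
    have hX := hk.resolve_left (by simp [fiRule, strictIf_eq_strict, hd])
    exact (forall_attack_meets_eformFalse_iff ⟨hr, hd⟩).1 hX
  · obtain ⟨-, hb, hU⟩ := mem_eformTrue_fiLit.1 (hbody rfl)
    refine mem_eformTrue_liftLit.2 (hT ⟨r, hr, rfl, hb, ?_⟩)
    cases hkind : r.kind
    · exact .inl rfl
    · exact .inr ⟨rfl, hU hkind⟩
    · exact absurd hkind hkr
  · refine mem_eformTrue_nfiLit.2 ⟨c, f, hf,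
      fun q hq => (mem_eformTrue_suLit.1 (hbody ⟨q, hq, rfl⟩)).2, ?_⟩
    refine hk.imp strictIf_eq_strict.1 fun hX => ?_
    obtain ⟨_, rfl, hmem⟩ := hX _ (fiRule_mem hf.1.1) rfl
    exact (mem_eformFalse_suLit.1 hmem).resolve_left (not_not.2 hf.1.1)

lemma fiLit_mem_TD_EForm (hr : r ∈ D.rules) (hb : r.body ⊆ T)
    (hU : r.kind = RuleKind.defeasible → Unchallenged D F r) :
    fiLit r ∈ TD (EForm D) (eformTrue D T F, eformFalse m D T F) := by
  refine mem_TD_EForm_iff.2 ⟨_, fiRule_mem hr, rfl,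
    Set.singleton_subset_iff.2 (mem_eformTrue_suLit.2 ⟨hr, hb⟩), ?_⟩
  by_cases hks : r.kind = RuleKind.strict
  · exact .inl (strictIf_eq_strict.2 hks)
  · refine .inr fun e he hh => ?_
    obtain ⟨c, f, hf, -⟩ := exists_attackChoice_of_head_eq_nfiLit he hh
    exact (forall_attack_meets_eformFalse_iff hf.1).2 (hU hf.1.2) e he hh

lemma liftLit_mem_TD_EForm {p : Lit A} (hp : p ∈ TD D (T, F)) :
    liftLit p ∈ TD (EForm D) (eformTrue D T F, eformFalse m D T F) := by
  obtain ⟨r, hr, rfl, hb, hk⟩ := hp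
  have hkr : r.kind ≠ RuleKind.defeater := by rcases hk with hk | ⟨hk, -⟩ <;> simp [hk]
  have hfi : fiLit r ∈ eformTrue D T F := mem_eformTrue_fiLit.2 ⟨hr, hb, fun hd =>
    (hk.resolve_left (by simp [hd])).2⟩
  exact mem_TD_EForm_iff.2 ⟨_, linkRule_mem hr hkr, rfl, Set.singleton_subset_iff.2 hfi, .inl rfl⟩

lemma nfiLit_mem_TD_EForm (h : nfiLit r ∈ eformTrue D T F) :
    nfiLit r ∈ TD (EForm D) (eformTrue D T F, eformFalse m D T F) := by
  obtain ⟨c, f, hf, hbody, hsa⟩ := mem_eformTrue_nfiLit.1 h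
  refine mem_TD_EForm_iff.2 ⟨_, attackRule_mem hf, rfl, ?_, ?_⟩
  · rintro _ ⟨q, hq, rfl⟩
    exact mem_eformTrue_suLit.2 ⟨(hf.2.2.2 q hq).1, hbody q hq⟩
  · refine hsa.imp strictIf_eq_strict.2 fun hb e he hh => ?_
    obtain rfl := eq_fiRule_of_head_eq_fiLit he hh
    exact ⟨suLit r, rfl, mem_eformFalse_suLit.2 (.inr hb)⟩

lemma eformTrue_subset_TD_EForm (hT : T ⊆ TD D (T, F)) :
    eformTrue D T F ⊆ TD (EForm D) (eformTrue D T F, eformFalse m D T F) := by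
  rintro ((a | ⟨r, _ | _⟩) | (a | ⟨r, _ | _⟩)) hl
  · exact liftLit_mem_TD_EForm (p := .pos a) (hT hl)
  · obtain ⟨hr, hb, hU⟩ := mem_eformTrue_fiLit.1 hl
    exact fiLit_mem_TD_EForm hr hb hU
  · exact mem_TD_EForm_iff.2 ⟨_, suRule_mem hl.1, rfl,
      by rintro _ ⟨q, hq, rfl⟩; exact mem_eformTrue_liftLit.2 (hl.2 hq), .inl rfl⟩
  · exact liftLit_mem_TD_EForm (p := .neg a) (hT hl)
  · exact nfiLit_mem_TD_EForm hl
  · exact hl.elim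

lemma unfounded_eformFalse (hwf : D.WellFormed) (hF : Unfounded m D (T, F) F) :
    Unfounded m (EForm D) (eformTrue D T F, eformFalse m D T F) (eformFalse m D T F) := by
  refine unfounded_EForm_iff.2 fun e he hmem => ?_
  rcases mem_EFormRules.1 he with ⟨r, hr, rfl⟩ | ⟨r, hr, rfl⟩ | ⟨r, hr, hkr, rfl⟩ |
    ⟨r, c, f, hf, rfl⟩
  · obtain ⟨p, hp, hpF⟩ := (mem_eformFalse_suLit.1 hmem).resolve_left (not_not.2 hr)
    exact .inl ⟨liftLit p, ⟨p, hp, rfl⟩, .inl (mem_eformFalse_liftLit.2 hpF)⟩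
  · rcases (mem_eformFalse_fiLit.1 hmem).resolve_left (not_not.2 hr) with hb | ⟨hd, hO⟩
    · exact .inl ⟨suLit r, rfl, .inl (mem_eformFalse_suLit.2 (.inr hb))⟩
    · exact .inr ⟨by simp [fiRule, strictIf_eq_strict, hd], hO.exists_attack hwf ⟨hr, hd⟩⟩
  · obtain ⟨hs, hd⟩ := hF r.head (mem_eformFalse_liftLit.1 hmem)
    have hfi : fiLit r ∈ eformFalse m D T F := by
      refine mem_eformFalse_fiLit.2 (.inr ?_)
      cases hkind : r.kind
      · exact .inl (by simpa using hs r ⟨hr, hkind⟩ rfl)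
      · exact (hd r ⟨hr, hkind⟩ rfl).imp (by simpa using ·) (⟨rfl, ·⟩)
      · exact absurd hkind hkr
    exact .inl ⟨fiLit r, rfl, .inl hfi⟩
  · rcases mem_eformFalse_nfiLit.1 hmem c f hf with ⟨q, hq, hqF⟩ | ⟨hns, rfl, hb⟩
    · exact .inl ⟨suLit (f q), ⟨q, hq, rfl⟩, .inl (mem_eformFalse_suLit.2 (.inr hqF))⟩
    · refine .inr ⟨by simpa [attackRule, strictIf_eq_strict], fiRule r, fiRule_mem hf.1.1, rfl,
        Set.singleton_subset_iff.2 (mem_eformTrue_suLit.2 ⟨hf.1.1, hb⟩), .inl rfl⟩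

variable {S : Set (Lit (A ⊕ DRule A × Bool))}

lemma body_meets_of_suLit_mem (hS : Unfounded m (EForm D) (eformTrue D T F, eformFalse m D T F) S)
    (hr : r ∈ D.rules) (h : suLit r ∈ eformFalse m D T F ∪ S) :
    (r.body ∩ (F ∪ liftLit ⁻¹' S)).Nonempty := by
  rcases h with h | h
  · exact ((mem_eformFalse_suLit.1 h).resolve_left (not_not.2 hr)).mono
      (Set.inter_subset_inter_right _ Set.subset_union_left)
  · obtain ⟨_, ⟨p, hp, rfl⟩, hpJ⟩ :=
      (unfounded_EForm_iff.1 hS _ (suRule_mem hr) h).resolve_right fun h' => h'.1 rfl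
    exact ⟨p, hp, hpJ.imp mem_eformFalse_liftLit.1 id⟩

lemma body_meets_or_overruled_of_fiLit_mem
    (hS : Unfounded m (EForm D) (eformTrue D T F, eformFalse m D T F) S)
    (hr : r ∈ D.rules) (h : fiLit r ∈ eformFalse m D T F ∪ S) :
    (r.body ∩ (F ∪ liftLit ⁻¹' S)).Nonempty ∨
      (r.kind = RuleKind.defeasible ∧ Overruled m D T r) := by
  rcases h with h | h
  · exact ((mem_eformFalse_fiLit.1 h).resolve_left (not_not.2 hr)).imp_left
      (·.mono (Set.inter_subset_inter_right _ Set.subset_union_left))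
  · rcases unfounded_EForm_iff.1 hS _ (fiRule_mem hr) h with ⟨_, rfl, hsu⟩ | ⟨-, hatt⟩
    · exact .inl (body_meets_of_suLit_mem hS hr hsu)
    · obtain ⟨⟨-, hd⟩, hO⟩ := overruled_of_exists_attack hatt
      exact .inr ⟨hd, hO⟩

lemma unfounded_preimage_liftLit
    (hS : Unfounded m (EForm D) (eformTrue D T F, eformFalse m D T F) S) :
    Unfounded m D (T, F) (liftLit ⁻¹' S) := by
  have hfi : ∀ r ∈ D.rules, r.kind ≠ RuleKind.defeater → liftLit r.head ∈ S →
      fiLit r ∈ eformFalse m D T F ∪ S := fun r hr hkr hp => by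
    obtain ⟨_, rfl, h⟩ := (unfounded_EForm_iff.1 hS _ (linkRule_mem hr hkr) hp).resolve_right
      fun h' => h'.1 rfl
    exact h
  refine fun p hp => ⟨fun r ⟨hr, hk⟩ hh => ?_, fun r ⟨hr, hk⟩ hh => ?_⟩ <;> subst hh
  · exact (body_meets_or_overruled_of_fiLit_mem hS hr (hfi r hr (by simp [hk]) hp)).resolve_right
      fun h => by simp [hk] at h
  · exact (body_meets_or_overruled_of_fiLit_mem hS hr (hfi r hr (by simp [hk]) hp)).imp_right
      And.right

lemma nfiLit_mem_eformFalse (hSF : F ∪ liftLit ⁻¹' S ⊆ F)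
    (hS : Unfounded m (EForm D) (eformTrue D T F, eformFalse m D T F) S) (h : nfiLit r ∈ S) :
    nfiLit r ∈ eformFalse m D T F := by
  refine mem_eformFalse_nfiLit.2 fun c f hf => ?_
  rcases unfounded_EForm_iff.1 hS _ (attackRule_mem hf) h with ⟨_, ⟨q, hq, rfl⟩, hsu⟩ |
    ⟨hk, s, hs, hsh, hsb, hmode⟩
  · exact .inl ⟨q, hq, (body_meets_of_suLit_mem hS (hf.2.2.2 q hq).1 hsu).mono
      (Set.inter_subset_inter_right _ hSF)⟩
  · obtain rfl := eq_fiRule_of_head_eq_fiLit hs hsh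
    refine .inr ⟨fun h => hk (strictIf_eq_strict.2 h), ?_, (mem_eformTrue_suLit.1 (hsb rfl)).2⟩
    cases m
    · have := strictIf_eq_strict.1 (hmode.resolve_left (by simp))
      simp [hf.1.2] at this
    · rfl

lemma subset_eformFalse_of_unfounded (hF : ∀ S, Unfounded m D (T, F) S → S ⊆ F)
    (hS : Unfounded m (EForm D) (eformTrue D T F, eformFalse m D T F) S) :
    S ⊆ eformFalse m D T F := by
  have hSF : F ∪ liftLit ⁻¹' S ⊆ F :=
    Set.union_subset subset_rfl (hF _ (unfounded_preimage_liftLit hS))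
  rintro ((a | ⟨r, _ | _⟩) | (a | ⟨r, _ | _⟩)) hl
  · exact (mem_eformFalse_liftLit (p := .pos a)).2 (hSF (.inr hl))
  · by_cases hr : r ∈ D.rules
    · refine mem_eformFalse_fiLit.2 (.inr ?_)
      exact (body_meets_or_overruled_of_fiLit_mem hS hr (.inr hl)).imp_left
        (·.mono (Set.inter_subset_inter_right _ hSF))
    · exact mem_eformFalse_fiLit.2 (.inl hr)
  · by_cases hr : r ∈ D.rules
    · exact mem_eformFalse_suLit.2 (.inr ((body_meets_of_suLit_mem hS hr (.inr hl)).mono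
        (Set.inter_subset_inter_right _ hSF)))
    · exact mem_eformFalse_suLit.2 (.inl hr)
  · exact (mem_eformFalse_liftLit (p := .neg a)).2 (hSF (.inr hl))
  · exact nfiLit_mem_eformFalse hSF hS hl
  · trivial

theorem W_EForm_eformTrue_eformFalse (hwf : D.WellFormed) (hfix : W m D (T, F) = (T, F)) :
    W m (EForm D) (eformTrue D T F, eformFalse m D T F) =
      (eformTrue D T F, eformFalse m D T F) := by
  obtain ⟨hT, hF⟩ := Prod.mk.inj hfix
  have hFunf : Unfounded m D (T, F) F := by
    simpa only [hF] using unfounded_greatestUnfounded (m := m) (D := D) (I := (T, F))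
  have hFmax : ∀ S, Unfounded m D (T, F) S → S ⊆ F := fun S hS => by
    rw [← hF]
    exact Set.subset_sUnion_of_mem hS
  exact Prod.ext
    (subset_antisymm (TD_EForm_subset hT.subset) (eformTrue_subset_TD_EForm hT.symm.subset))
    (subset_antisymm (Set.sUnion_subset fun S hS => subset_eformFalse_of_unfounded hFmax hS)
      (Set.subset_sUnion_of_mem (unfounded_eformFalse hwf hFunf)))

end Extension

lemma mem_of_liftLit_mem_isWFModel_EForm (m : Mode) {D : DTheory A} (hwf : D.WellFormed)
    {ID : Interp (Lit A)} {IE : Interp (Lit (A ⊕ DRule A × Bool))} (hID : W m D ID = ID)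
    (hIE : IsWFModel (W m (EForm D)) IE) (p : Lit A) :
    (liftLit p ∈ IE.1 → p ∈ ID.1) ∧ (liftLit p ∈ IE.2 → p ∈ ID.2) := by
  obtain ⟨T, F⟩ := ID
  obtain ⟨hT, hF⟩ := hIE.2 _ (W_EForm_eformTrue_eformFalse hwf hID)
  exact ⟨fun h => mem_eformTrue_liftLit.1 (hT h), fun h => mem_eformFalse_liftLit.1 (hF h)⟩

theorem eform_complete_general {A : Type*} (D : DTheory A) (hwf : D.WellFormed) :
    (∀ (ID : Interp (Lit A)) (IE : Interp (Lit (A ⊕ DRule A × Bool))),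
      IsWFModel (WA D) ID → IsWFModel (WA (EForm D)) IE →
      ∀ p : Lit A, (liftLit p ∈ IE.1 → p ∈ ID.1) ∧ (liftLit p ∈ IE.2 → p ∈ ID.2)) ∧
    (∀ (ID : Interp (Lit A)) (IE : Interp (Lit (A ⊕ DRule A × Bool))),
      IsWFModel (WN D) ID → IsWFModel (WN (EForm D)) IE →
      ∀ p : Lit A, (liftLit p ∈ IE.1 → p ∈ ID.1) ∧ (liftLit p ∈ IE.2 → p ∈ ID.2)) :=
  ⟨fun _ _ hID hIE => mem_of_liftLit_mem_isWFModel_EForm .adl hwf hID.1 hIE,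
    fun _ _ hID hIE => mem_of_liftLit_mem_isWFModel_EForm .ndl hwf hID.1 hIE⟩

/-- Let `D` be a defeasible theory with `C_D[p]` finite for all literals `p`, and `E`
its defeater- and priority-free form. Taking the well-founded models of `D` and `E`
both under ADL, or both under NDL: for every literal `p` of `D`, if `p ∈ T_{E,WF}`
then `p ∈ T_{D,WF}`, and if `p ∈ F_{E,WF}` then `p ∈ F_{D,WF}`. -/
theorem eform_complete {A : Type*} (D : DTheory A) (hwf : D.WellFormed)
    (hfin : ∀ p : Lit A, (D.Cset p).Finite) :
    (∀ (ID : Interp (Lit A)) (IE : Interp (Lit (A ⊕ DRule A × Bool))),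
      IsWFModel (WA D) ID → IsWFModel (WA (EForm D)) IE →
      ∀ p : Lit A, (liftLit p ∈ IE.1 → p ∈ ID.1) ∧ (liftLit p ∈ IE.2 → p ∈ ID.2)) ∧
    (∀ (ID : Interp (Lit A)) (IE : Interp (Lit (A ⊕ DRule A × Bool))),
      IsWFModel (WN D) ID → IsWFModel (WN (EForm D)) IE →
      ∀ p : Lit A, (liftLit p ∈ IE.1 → p ∈ ID.1) ∧ (liftLit p ∈ IE.2 → p ∈ ID.2)) :=
  eform_complete_general D hwf

end DLWFS
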